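/- The infinite Fibonacci word f contains no fourth power; that is, there do not exist an index i ≥ 0 and an integer n ≥ 1 such that f[i+t] = f[i+n+t] for all t with 0 ≤ t < 3n. -/

import Mathlib

/-!
Since `f = φ(f)`, the letters of `f` fall into consecutive blocks `φ(f_j)`, equal to `01` or `0`
according as `f_j` is `0` or `1`; the zeros of `f` are exactly the first letters of the blocks.
A factor of length `4n - 1` with period `n ≥ 2` can be moved one letter to the left, if needed,
so that it starts with a block; reading it back block by block gives a factor of length `4m - 1`
with period `m < n`, where `m` is the number of blocks in one period. Descending, one reaches
period `1`, i.e. three equal consecutive letters, which is impossible because `f` contains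
neither `11` nor `000`.
-/

/-- The Fibonacci morphism φ: 0 ↦ 01, 1 ↦ 0. -/
def fibPhi (w : List ℕ) : List ℕ := (w.map (fun c => if c = 0 then [0, 1] else [0])).flatten

/-- The infinite Fibonacci word f = 0100101001001⋯, the fixed point of φ starting with 0. -/
def fibWord (i : ℕ) : ℕ := ((fibPhi^[i + 2]) [0]).getD i 0

/-- A finite word is a factor of the infinite Fibonacci word. -/
def IsFibFactor (x : List ℕ) : Prop :=
  ∃ i : ℕ, x = (List.range x.length).map (fun t => fibWord (i + t))

def fibPhiIter (k : ℕ) : List ℕ := fibPhi^[k] [0]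

lemma fibPhi_append (a b : List ℕ) : fibPhi (a ++ b) = fibPhi a ++ fibPhi b := by
  simp [fibPhi]

lemma fibPhi_prefix {a b : List ℕ} (h : a <+: b) : fibPhi a <+: fibPhi b := by
  obtain ⟨c, rfl⟩ := h
  exact ⟨fibPhi c, (fibPhi_append a c).symm⟩

lemma fibPhi_singleton (c : ℕ) : fibPhi [c] = if c = 0 then [0, 1] else [0] := by
  simp [fibPhi]

lemma fibPhiIter_succ (k : ℕ) : fibPhiIter (k + 1) = fibPhi (fibPhiIter k) :=
  Function.iterate_succ_apply' _ _ _

lemma fibPhiIter_add_two : ∀ k, fibPhiIter (k + 2) = fibPhiIter (k + 1) ++ fibPhiIter k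
  | 0 => by decide
  | k + 1 => by
    show fibPhiIter (k + 2 + 1) = fibPhiIter (k + 1 + 1) ++ fibPhiIter (k + 1)
    rw [fibPhiIter_succ (k + 1), fibPhiIter_succ (k + 2), fibPhiIter_add_two k, fibPhi_append,
      fibPhiIter_succ k]

lemma fibPhiIter_prefix_succ : ∀ k, fibPhiIter k <+: fibPhiIter (k + 1)
  | 0 => ⟨[1], by decide⟩
  | k + 1 => ⟨fibPhiIter k, (fibPhiIter_add_two k).symm⟩

lemma fibPhiIter_prefix {k l : ℕ} (h : k ≤ l) : fibPhiIter k <+: fibPhiIter l := by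
  induction h with
  | refl => exact List.prefix_refl _
  | step _ ih => exact ih.trans (fibPhiIter_prefix_succ _)

lemma lt_length_fibPhiIter : ∀ k, k < (fibPhiIter k).length
  | 0 => by decide
  | 1 => by decide
  | k + 2 => by
    have := lt_length_fibPhiIter k
    have := lt_length_fibPhiIter (k + 1)
    rw [fibPhiIter_add_two, List.length_append]
    omega

lemma fibWord_eq_getElem {i k : ℕ} (h : i < (fibPhiIter k).length) :
    fibWord i = (fibPhiIter k)[i] := by
  have hi : i < (fibPhiIter (i + 2)).length := (lt_length_fibPhiIter _).trans' (by omega)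
  show (fibPhiIter (i + 2)).getD i 0 = _
  rw [List.getD_eq_getElem _ _ hi]
  rcases le_total (i + 2) k with hk | hk
  · exact (fibPhiIter_prefix hk).getElem hi
  · exact ((fibPhiIter_prefix hk).getElem h).symm

def fibPrefix (j : ℕ) : List ℕ := (List.range j).map fibWord

lemma fibPrefix_succ (j : ℕ) : fibPrefix (j + 1) = fibPrefix j ++ [fibWord j] := by
  simp [fibPrefix, List.range_succ]

lemma getElem?_fibPrefix {i j : ℕ} (h : i < j) : (fibPrefix j)[i]? = some (fibWord i) := by
  simp [fibPrefix, List.getElem?_range h]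

lemma fibPrefix_eq_take {j k : ℕ} (h : j ≤ (fibPhiIter k).length) :
    fibPrefix j = (fibPhiIter k).take j := by
  refine List.ext_getElem (by simp [fibPrefix]; omega) fun i hi _ => ?_
  simp only [fibPrefix, List.length_map, List.length_range] at hi
  simp [fibPrefix, fibWord_eq_getElem (show i < (fibPhiIter k).length by omega)]

-- As `φ(f) = f`, the block `φ(f_j)` occurs in `f` at this position.
def fibBlockStart (j : ℕ) : ℕ := (fibPhi (fibPrefix j)).length

lemma fibPrefix_fibBlockStart (j : ℕ) : fibPrefix (fibBlockStart j) = fibPhi (fibPrefix j) := by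
  have hj : j ≤ (fibPhiIter (j + 1)).length := (lt_length_fibPhiIter _).le.trans' (by omega)
  have hpre : fibPhi (fibPrefix j) <+: fibPhiIter (j + 2) := by
    rw [fibPhiIter_succ, fibPrefix_eq_take hj]
    exact fibPhi_prefix (List.take_prefix _ _)
  rw [List.prefix_iff_eq_take.mp hpre, fibBlockStart, fibPrefix_eq_take hpre.length_le]

lemma fibBlockStart_succ_eq_add_length (j : ℕ) :
    fibBlockStart (j + 1) = fibBlockStart j + (fibPhi [fibWord j]).length := by
  rw [fibBlockStart, fibPrefix_succ, fibPhi_append, List.length_append, fibBlockStart]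

lemma fibWord_fibBlockStart_add {j r : ℕ} (hr : r < (fibPhi [fibWord j]).length) :
    fibWord (fibBlockStart j + r) = (fibPhi [fibWord j])[r] := by
  have h := congrArg (·[fibBlockStart j + r]?) (fibPrefix_fibBlockStart (j + 1))
  rw [getElem?_fibPrefix (by rw [fibBlockStart_succ_eq_add_length]; omega), fibPrefix_succ,
    fibPhi_append, ← fibPrefix_fibBlockStart, List.getElem?_append_right (by simp [fibPrefix]),
    List.getElem?_eq_getElem (by simpa [fibPrefix] using hr)] at h
  simpa [fibPrefix] using h

lemma fibWord_fibBlockStart (j : ℕ) : fibWord (fibBlockStart j) = 0 := by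
  by_cases h : fibWord j = 0 <;>
    simpa [fibPhi_singleton, h] using
      fibWord_fibBlockStart_add (j := j) (r := 0) (by simp [fibPhi_singleton, h])

lemma fibWord_fibBlockStart_add_one_of_eq_zero {j : ℕ} (h : fibWord j = 0) :
    fibWord (fibBlockStart j + 1) = 1 := by
  rw [fibWord_fibBlockStart_add (by simp [fibPhi_singleton, h])]
  simp [fibPhi_singleton, h]

lemma fibBlockStart_succ_of_eq_zero {j : ℕ} (h : fibWord j = 0) :
    fibBlockStart (j + 1) = fibBlockStart j + 2 := by
  simp [fibBlockStart_succ_eq_add_length, fibPhi_singleton, h]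

lemma fibBlockStart_succ_of_ne_zero {j : ℕ} (h : fibWord j ≠ 0) :
    fibBlockStart (j + 1) = fibBlockStart j + 1 := by
  simp [fibBlockStart_succ_eq_add_length, fibPhi_singleton, h]

lemma fibBlockStart_lt_succ (j : ℕ) : fibBlockStart j < fibBlockStart (j + 1) := by
  by_cases h : fibWord j = 0
  · rw [fibBlockStart_succ_of_eq_zero h]; omega
  · rw [fibBlockStart_succ_of_ne_zero h]; omega

lemma fibBlockStart_strictMono : StrictMono fibBlockStart :=
  strictMono_nat_of_lt_succ fibBlockStart_lt_succ

lemma exists_fibBlockStart_le_lt (s : ℕ) :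
    ∃ j, fibBlockStart j ≤ s ∧ s < fibBlockStart (j + 1) := by
  induction s with
  | zero => exact ⟨0, le_rfl, fibBlockStart_lt_succ 0⟩
  | succ s ih =>
    obtain ⟨j, hjs, hsj⟩ := ih
    rcases (show s + 1 ≤ fibBlockStart (j + 1) from hsj).lt_or_eq with h | h
    · exact ⟨j, by omega, h⟩
    · exact ⟨j + 1, h.ge, h ▸ fibBlockStart_lt_succ (j + 1)⟩

lemma fibWord_le_one (s : ℕ) : fibWord s ≤ 1 := by
  obtain ⟨j, hjs, hsj⟩ := exists_fibBlockStart_le_lt s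
  by_cases h : fibWord j = 0
  · rw [fibBlockStart_succ_of_eq_zero h] at hsj
    obtain rfl | rfl : s = fibBlockStart j ∨ s = fibBlockStart j + 1 := by omega
    · simp [fibWord_fibBlockStart]
    · simp [fibWord_fibBlockStart_add_one_of_eq_zero h]
  · rw [fibBlockStart_succ_of_ne_zero h] at hsj
    obtain rfl : s = fibBlockStart j := by omega
    simp [fibWord_fibBlockStart]

lemma fibBlockStart_succ (j : ℕ) : fibBlockStart (j + 1) = fibBlockStart j + 2 - fibWord j := by
  by_cases h : fibWord j = 0
  · rw [fibBlockStart_succ_of_eq_zero h, h, Nat.sub_zero]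
  · rw [fibBlockStart_succ_of_ne_zero h]
    have := fibWord_le_one j
    omega

lemma fibWord_fibBlockStart_add_one (j : ℕ) : fibWord (fibBlockStart j + 1) = 1 - fibWord j := by
  by_cases h : fibWord j = 0
  · rw [fibWord_fibBlockStart_add_one_of_eq_zero h, h]
  · rw [← fibBlockStart_succ_of_ne_zero h, fibWord_fibBlockStart]
    have := fibWord_le_one j
    omega

lemma exists_eq_fibBlockStart_of_fibWord_eq_zero {s : ℕ} (h : fibWord s = 0) :
    ∃ j, s = fibBlockStart j := by
  obtain ⟨j, hjs, hsj⟩ := exists_fibBlockStart_le_lt s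
  have h1 := fibWord_fibBlockStart_add_one j
  have h2 := fibBlockStart_succ j
  rcases hjs.eq_or_lt with hj | hlt
  · exact ⟨j, hj.symm⟩
  · obtain rfl : s = fibBlockStart j + 1 := by omega
    omega

lemma exists_eq_fibBlockStart_add_one_of_fibWord_ne_zero {s : ℕ} (h : fibWord s ≠ 0) :
    ∃ j, s = fibBlockStart j + 1 := by
  obtain ⟨j, hjs, hsj⟩ := exists_fibBlockStart_le_lt s
  refine ⟨j, ?_⟩
  have := fibBlockStart_succ j
  rcases hjs.eq_or_lt with rfl | hlt
  · exact absurd (fibWord_fibBlockStart j) h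
  · omega

lemma fibWord_succ_eq_zero_of_ne_zero {s : ℕ} (h : fibWord s ≠ 0) : fibWord (s + 1) = 0 := by
  obtain ⟨j, rfl⟩ := exists_eq_fibBlockStart_add_one_of_fibWord_ne_zero h
  have hj : fibWord j = 0 := by rw [fibWord_fibBlockStart_add_one] at h; omega
  rw [← fibBlockStart_succ_of_eq_zero hj, fibWord_fibBlockStart]

lemma fibBlockStart_add_three_le (a : ℕ) : fibBlockStart a + 3 ≤ fibBlockStart (a + 2) := by
  rw [show a + 2 = a + 1 + 1 from rfl]
  have h1 := fibBlockStart_succ a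
  have h2 := fibBlockStart_succ (a + 1)
  have := fibWord_le_one a
  have := fibWord_le_one (a + 1)
  rcases eq_or_ne (fibWord a) 0 with ha | ha
  · omega
  · have := fibWord_succ_eq_zero_of_ne_zero ha
    omega

lemma fibBlockStart_add_lt {a k : ℕ} (hk : 2 ≤ k) :
    fibBlockStart a + k < fibBlockStart (a + k) := by
  have h3 := fibBlockStart_add_three_le a
  have hle := fibBlockStart_strictMono.add_le_nat (k - 2) (a + 2)
  rw [show k - 2 + (a + 2) = a + k by omega] at hle
  omega

def FibPeriodic (p n L : ℕ) : Prop := ∀ t < L, fibWord (p + t) = fibWord (p + n + t)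

lemma not_fibPeriodic_one (p : ℕ) : ¬ FibPeriodic p 1 2 := by
  intro h
  have h01 : fibWord p = fibWord (p + 1) := h 0 (by omega)
  have h12 : fibWord (p + 1) = fibWord (p + 1 + 1) := h 1 (by omega)
  rcases eq_or_ne (fibWord p) 0 with h0 | h0
  · obtain ⟨j, rfl⟩ := exists_eq_fibBlockStart_of_fibWord_eq_zero h0
    have hj : fibWord j ≠ 0 := by
      have := fibWord_fibBlockStart_add_one j
      omega
    have hj1 : fibWord (j + 1) ≠ 0 := by
      have := fibWord_fibBlockStart_add_one (j + 1)
      rw [fibBlockStart_succ_of_ne_zero hj] at this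
      omega
    exact hj1 (fibWord_succ_eq_zero_of_ne_zero hj)
  · exact h0 (h01 ▸ fibWord_succ_eq_zero_of_ne_zero h0)

lemma FibPeriodic.exists_fibBlockStart {p n L : ℕ} (hL : 0 < L) (h : FibPeriodic p n L) :
    ∃ j, FibPeriodic (fibBlockStart j) n L := by
  rcases eq_or_ne (fibWord p) 0 with hp | hp
  · obtain ⟨j, rfl⟩ := exists_eq_fibBlockStart_of_fibWord_eq_zero hp
    exact ⟨j, h⟩
  · obtain ⟨j, rfl⟩ := exists_eq_fibBlockStart_add_one_of_fibWord_ne_zero hp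
    have hpn : fibWord (fibBlockStart j + 1 + n) ≠ 0 := by
      have := h 0 (by omega)
      simp only [Nat.add_zero] at this
      rwa [← this]
    obtain ⟨j', hj'⟩ := exists_eq_fibBlockStart_add_one_of_fibWord_ne_zero hpn
    refine ⟨j, fun t ht => ?_⟩
    rcases t with _ | t
    · rw [Nat.add_zero, Nat.add_zero, show fibBlockStart j + n = fibBlockStart j' by omega,
        fibWord_fibBlockStart, fibWord_fibBlockStart]
    · have := h t (by omega)
      rwa [show fibBlockStart j + 1 + t = fibBlockStart j + (t + 1) by omega,
        show fibBlockStart j + 1 + n + t = fibBlockStart j + n + (t + 1) by omega] at this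

lemma FibPeriodic.fibBlockStart_periodic {j m n L : ℕ} (h : FibPeriodic (fibBlockStart j) n L)
    (hm : fibBlockStart (j + m) = fibBlockStart j + n) {a : ℕ} (hja : j ≤ a)
    (haL : fibBlockStart a + 1 < fibBlockStart j + L) :
    fibBlockStart (a + m) = fibBlockStart a + n ∧ fibWord a = fibWord (a + m) := by
  have letter_eq : ∀ a, j ≤ a → fibBlockStart a + 1 < fibBlockStart j + L →
      fibBlockStart (a + m) = fibBlockStart a + n → fibWord a = fibWord (a + m) := by
    intro a hja haL hBa
    have hle := fibBlockStart_strictMono.monotone hja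
    have := h (fibBlockStart a + 1 - fibBlockStart j) (by omega)
    rw [show fibBlockStart j + (fibBlockStart a + 1 - fibBlockStart j) = fibBlockStart a + 1 by
        omega, show fibBlockStart j + n + (fibBlockStart a + 1 - fibBlockStart j) =
        fibBlockStart (a + m) + 1 by omega, fibWord_fibBlockStart_add_one,
      fibWord_fibBlockStart_add_one] at this
    have := fibWord_le_one a
    have := fibWord_le_one (a + m)
    omega
  induction a, hja using Nat.le_induction with
  | base => exact ⟨hm, letter_eq j le_rfl haL hm⟩
  | succ a hja ih =>
    have := fibBlockStart_lt_succ a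
    obtain ⟨hBa, hfa⟩ := ih (by omega)
    have hBa' : fibBlockStart (a + 1 + m) = fibBlockStart (a + 1) + n := by
      rw [Nat.add_right_comm, fibBlockStart_succ, fibBlockStart_succ, hBa, hfa]
      have := fibWord_le_one (a + m)
      omega
    exact ⟨hBa', letter_eq _ (by omega) haL hBa'⟩

lemma FibPeriodic.exists_lt {j n : ℕ} (hn : 2 ≤ n)
    (h : FibPeriodic (fibBlockStart j) n (3 * n - 1)) :
    ∃ m, 1 ≤ m ∧ m < n ∧ FibPeriodic j m (3 * m - 1) := by
  obtain ⟨m, hm1, hm⟩ : ∃ m, 1 ≤ m ∧ fibBlockStart (j + m) = fibBlockStart j + n := by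
    have hjn : fibWord (fibBlockStart j + n) = 0 := by
      simpa [fibWord_fibBlockStart] using (h 0 (by omega)).symm
    obtain ⟨j', hj'⟩ := exists_eq_fibBlockStart_of_fibWord_eq_zero hjn
    have hjj' : j < j' := fibBlockStart_strictMono.lt_iff_lt.mp (by omega)
    exact ⟨j' - j, by omega, by rw [Nat.add_sub_cancel' hjj'.le]; omega⟩
  have hper := fun a (hja : j ≤ a) haL => h.fibBlockStart_periodic hm hja haL
  -- With `B = fibBlockStart`: `B (j + 3m - 2) = B (j + m - 2) + 2n ≤ B (j + m) - 3 + 2n`.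
  have hend : fibBlockStart (j + (3 * m - 2)) + 1 < fibBlockStart j + (3 * n - 1) := by
    obtain rfl | ⟨k, rfl⟩ : m = 1 ∨ ∃ k, m = k + 2 :=
      (Nat.lt_or_ge m 2).imp (by omega) fun _ => ⟨m - 2, by omega⟩
    · rw [show j + (3 * 1 - 2) = j + 1 from rfl]
      omega
    · rw [← add_assoc] at hm
      have := fibBlockStart_add_three_le (j + k)
      have h1 := (hper (j + k) (by omega) (by omega)).1
      have h2 := (hper (j + k + (k + 2)) (by omega) (by omega)).1
      rw [show j + (3 * (k + 2) - 2) = j + k + (k + 2) + (k + 2) by omega]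
      omega
  refine ⟨m, hm1, ?_, fun u hu => ?_⟩
  · rcases (show m = 1 ∨ 2 ≤ m by omega) with rfl | hm2
    · omega
    · have := fibBlockStart_add_lt (a := j) hm2
      omega
  · have := fibBlockStart_strictMono.monotone (show j + u ≤ j + (3 * m - 2) by omega)
    rw [← Nat.add_right_comm]
    exact (hper (j + u) (by omega) (by omega)).2

theorem not_fibPeriodic {n : ℕ} (hn : 1 ≤ n) (p : ℕ) : ¬ FibPeriodic p n (3 * n - 1) := by
  induction n using Nat.strong_induction_on generalizing p with
  | _ n ih =>
    intro h
    obtain rfl | hn2 := hn.eq_or_lt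
    · exact not_fibPeriodic_one p h
    · obtain ⟨j, hj⟩ := h.exists_fibBlockStart (by omega)
      obtain ⟨m, hm1, hmn, hm⟩ := hj.exists_lt hn2
      exact ih m hmn hm1 j hm

/-- The infinite Fibonacci word contains no fourth power. -/
theorem fibWord_no_fourth_power :
    ¬ ∃ i n : ℕ, 1 ≤ n ∧ ∀ t < 3 * n, fibWord (i + t) = fibWord (i + n + t) := by
  rintro ⟨i, n, hn, h⟩
  exact not_fibPeriodic hn i fun t ht => h t (by omega)
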